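/- In the root system D_n realized as Δ = {±e_i ± e_j : 1 ≤ i < j ≤ n} with involution θ negating the coordinate e_n (θ(e_i) = e_i for i < n, θ(e_n) = −e_n), a pair of roots (α, β) satisfies that both α + β and α − θβ are roots if and only if (α, β) = (ε_i e_i + ε_n e_n, ε_j e_j − ε_n e_n) for distinct i, j ∈ {1, …, n−1} and signs ε_i, ε_j, ε_n ∈ {1, −1}. -/

import Mathlib

open scoped RealInnerProductSpace

/-- The standard basis vector `e_i` of `ℝ^n`. -/
noncomputable def e (n : ℕ) (i : Fin n) : EuclideanSpace ℝ (Fin n) :=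
  EuclideanSpace.single i 1

/-- The root system `D_n`: `{±e_i ± e_j : i < j}`. -/
def ΔD (n : ℕ) : Set (EuclideanSpace ℝ (Fin n)) :=
  {v | ∃ i j : Fin n, i < j ∧ ∃ ε δ : ℝ, (ε = 1 ∨ ε = -1) ∧ (δ = 1 ∨ δ = -1) ∧
    v = ε • e n i + δ • e n j}

/-- The involution `θ` negating the last coordinate. -/
noncomputable def θD (n : ℕ) (v : EuclideanSpace ℝ (Fin n)) :
    EuclideanSpace ℝ (Fin n) :=
  WithLp.toLp 2 (fun i => if i.val = n - 1 then -v i else v i)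

/-! Every root has squared length 2, so `α + β ∈ Δ` forces
`⟪α, β⟫ = -1` and `α - θβ ∈ Δ` forces `⟪α, θβ⟫ = 1` (θ is an isometry). Since
`β - θβ = 2 β_n e_n`, subtracting gives `α_n β_n = -1`: both roots involve `e_n`, with opposite
signs, and their other indices differ because otherwise `⟪α, β⟫ ∈ {0, -2}`. -/

section

variable {n : ℕ}

lemma e_apply (i j : Fin n) : e n i j = if j = i then 1 else 0 := by
  simp [e, PiLp.single_apply]

lemma inner_e_left (i : Fin n) (v : EuclideanSpace ℝ (Fin n)) : ⟪e n i, v⟫ = v i := by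
  simp [e, EuclideanSpace.inner_single_left]

lemma inner_e_e (i j : Fin n) : ⟪e n i, e n j⟫ = if i = j then 1 else 0 := by
  rw [inner_e_left, e_apply]

lemma add_smul_e_mem_ΔD {i j : Fin n} (hij : i ≠ j) {ε δ : ℝ}
    (hε : ε = 1 ∨ ε = -1) (hδ : δ = 1 ∨ δ = -1) : ε • e n i + δ • e n j ∈ ΔD n := by
  rcases hij.lt_or_gt with h | h
  · exact ⟨i, j, h, ε, δ, hε, hδ, rfl⟩
  · exact ⟨j, i, h, δ, ε, hδ, hε, add_comm _ _⟩

lemma inner_self_of_mem_ΔD {v : EuclideanSpace ℝ (Fin n)} (hv : v ∈ ΔD n) : ⟪v, v⟫ = 2 := by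
  obtain ⟨i, j, hij, ε, δ, hε, hδ, rfl⟩ := hv
  simp only [inner_add_left, inner_add_right, real_inner_smul_left, real_inner_smul_right,
    inner_e_e, if_neg hij.ne, if_neg hij.ne']
  rcases hε with rfl | rfl <;> rcases hδ with rfl | rfl <;> norm_num

lemma eq_add_of_mem_ΔD_of_apply_ne_zero {v : EuclideanSpace ℝ (Fin n)} (hv : v ∈ ΔD n)
    {k : Fin n} (hk : v k ≠ 0) :
    (v k = 1 ∨ v k = -1) ∧ ∃ i ≠ k, ∃ ε : ℝ, (ε = 1 ∨ ε = -1) ∧ v = ε • e n i + v k • e n k := by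
  obtain ⟨i, j, hij, ε, δ, hε, hδ, rfl⟩ := hv
  have hvk : (ε • e n i + δ • e n j) k = (if k = i then ε else 0) + (if k = j then δ else 0) := by
    simp [e_apply]
  rw [hvk] at hk ⊢
  by_cases hki : k = i
  · subst hki
    simp only [if_neg hij.ne, add_zero]
    exact ⟨hε, j, hij.ne', δ, hδ, add_comm _ _⟩
  by_cases hkj : k = j
  · subst hkj
    simp only [if_neg hki, zero_add]
    exact ⟨hδ, i, hij.ne, ε, hε, rfl⟩
  simp [hki, hkj] at hk

lemma θD_apply (v : EuclideanSpace ℝ (Fin n)) (i : Fin n) :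
    θD n v i = if i.val = n - 1 then -v i else v i := rfl

lemma inner_θD_θD (u v : EuclideanSpace ℝ (Fin n)) : ⟪θD n u, θD n v⟫ = ⟪u, v⟫ := by
  simp only [PiLp.inner_apply, θD_apply]
  refine Finset.sum_congr rfl fun i _ => ?_
  split_ifs <;> simp

lemma θD_eq_sub {k : Fin n} (hk : k.val = n - 1) (v : EuclideanSpace ℝ (Fin n)) :
    θD n v = v - (2 * v k) • e n k := by
  ext i
  simp only [θD_apply, PiLp.sub_apply, PiLp.smul_apply, e_apply, smul_eq_mul, ← hk,
    ← Fin.ext_iff]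
  split_ifs with h
  · subst h; ring
  · ring

lemma inner_sub_inner_θD {k : Fin n} (hk : k.val = n - 1) (u v : EuclideanSpace ℝ (Fin n)) :
    ⟪u, v⟫ - ⟪u, θD n v⟫ = 2 * u k * v k := by
  rw [θD_eq_sub hk, inner_sub_right, real_inner_smul_right, real_inner_comm (e n k), inner_e_left]
  ring

lemma inner_eq_neg_one_of_add_mem_ΔD {α β : EuclideanSpace ℝ (Fin n)} (hα : α ∈ ΔD n)
    (hβ : β ∈ ΔD n) (h : α + β ∈ ΔD n) : ⟪α, β⟫ = -1 := by
  have := real_inner_add_add_self α β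
  rw [inner_self_of_mem_ΔD hα, inner_self_of_mem_ΔD hβ, inner_self_of_mem_ΔD h] at this
  linarith

lemma inner_θD_eq_one_of_sub_θD_mem_ΔD {α β : EuclideanSpace ℝ (Fin n)} (hα : α ∈ ΔD n)
    (hβ : β ∈ ΔD n) (h : α - θD n β ∈ ΔD n) : ⟪α, θD n β⟫ = 1 := by
  have := real_inner_sub_sub_self α (θD n β)
  rw [inner_self_of_mem_ΔD hα, inner_θD_θD, inner_self_of_mem_ΔD hβ,
    inner_self_of_mem_ΔD h] at this
  linarith

lemma inner_smul_e_add_smul_e {i k : Fin n} (hik : i ≠ k) (a b c d : ℝ) :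
    ⟪a • e n i + b • e n k, c • e n i + d • e n k⟫ = a * c + b * d := by
  simp only [inner_add_left, inner_add_right, real_inner_smul_left, real_inner_smul_right,
    inner_e_e, if_neg hik, if_neg hik.symm, if_true]
  ring

lemma apply_of_add_mem_ΔD_of_sub_θD_mem_ΔD {k : Fin n} (hk : k.val = n - 1)
    {α β : EuclideanSpace ℝ (Fin n)} (hα : α ∈ ΔD n) (hβ : β ∈ ΔD n) (hsum : α + β ∈ ΔD n)
    (hdiff : α - θD n β ∈ ΔD n) : (α k = 1 ∨ α k = -1) ∧ β k = -α k := by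
  have hαβk : α k * β k = -1 := by
    have := inner_sub_inner_θD hk α β
    rw [inner_eq_neg_one_of_add_mem_ΔD hα hβ hsum,
      inner_θD_eq_one_of_sub_θD_mem_ΔD hα hβ hdiff] at this
    linarith
  have hαk := (eq_add_of_mem_ΔD_of_apply_ne_zero hα
    (left_ne_zero_of_mul (by rw [hαβk]; norm_num))).1
  refine ⟨hαk, ?_⟩
  rcases hαk with h | h <;> rw [h] at hαβk ⊢ <;> linarith

lemma θD_smul_e_sub_smul_e {j k : Fin n} (hk : k.val = n - 1) (hjk : j ≠ k) (a b : ℝ) :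
    θD n (a • e n j - b • e n k) = a • e n j + b • e n k := by
  have hvk : (a • e n j - b • e n k) k = -b := by simp [e_apply, hjk.symm]
  rw [θD_eq_sub hk, hvk]
  module

lemma val_lt_sub_one_of_ne {i k : Fin n} (hk : k.val = n - 1) (hik : i ≠ k) :
    i.val < n - 1 := by
  have := Fin.val_ne_of_ne hik
  omega

end

/-- In `D_n` with `θ` negating `e_n`, `(α, β)` is matched (both `α + β`
and `α − θβ` are roots) iff `(α, β) = (ε_i e_i + ε_n e_n, ε_j e_j − ε_n e_n)` for
distinct `i, j < n` and signs `ε_i, ε_j, ε_n`. -/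
theorem matched_pairs_Dn (n : ℕ) (hn : 4 ≤ n)
    (α β : EuclideanSpace ℝ (Fin n))
    (hα : α ∈ ΔD n) (hβ : β ∈ ΔD n) :
    (α + β ∈ ΔD n ∧ α - θD n β ∈ ΔD n) ↔
      ∃ (i j : Fin n) (εi εj εn : ℝ), i ≠ j ∧ i.val < n - 1 ∧ j.val < n - 1 ∧
        (εi = 1 ∨ εi = -1) ∧ (εj = 1 ∨ εj = -1) ∧ (εn = 1 ∨ εn = -1) ∧
        α = εi • e n i + εn • e n ⟨n - 1, by omega⟩ ∧
        β = εj • e n j - εn • e n ⟨n - 1, by omega⟩ := by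
  set L : Fin n := ⟨n - 1, by omega⟩
  have hL : L.val = n - 1 := rfl
  constructor
  · rintro ⟨hsum, hdiff⟩
    obtain ⟨hαL, hβL⟩ := apply_of_add_mem_ΔD_of_sub_θD_mem_ΔD hL hα hβ hsum hdiff
    obtain ⟨-, i, hiL, εi, hεi, hαeq⟩ :=
      eq_add_of_mem_ΔD_of_apply_ne_zero hα (k := L) (by rcases hαL with h | h <;> norm_num [h])
    obtain ⟨-, j, hjL, εj, hεj, hβeq⟩ :=
      eq_add_of_mem_ΔD_of_apply_ne_zero hβ (k := L) (by rcases hαL with h | h <;> norm_num [hβL, h])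
    refine ⟨i, j, εi, εj, α L, ?_, val_lt_sub_one_of_ne hL hiL, val_lt_sub_one_of_ne hL hjL,
      hεi, hεj, hαL, hαeq, by rw [hβeq, hβL, neg_smul, sub_eq_add_neg]⟩
    rintro rfl
    have hεε : εi * εj + α L * β L = -1 := by
      rw [← inner_smul_e_add_smul_e hiL, ← hαeq, ← hβeq]
      exact inner_eq_neg_one_of_add_mem_ΔD hα hβ hsum
    rw [hβL] at hεε
    rcases hεi with rfl | rfl <;> rcases hεj with rfl | rfl <;> rcases hαL with h | h <;>
      norm_num [h] at hεε
  · rintro ⟨i, j, εi, εj, εn, hij, -, hj, hεi, hεj, -, rfl, rfl⟩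
    have hjL : j ≠ L := fun h => by rw [h] at hj; omega
    refine ⟨?_, ?_⟩
    · convert add_smul_e_mem_ΔD hij hεi hεj using 1
      abel
    · rw [θD_smul_e_sub_smul_e hL hjL]
      convert add_smul_e_mem_ΔD hij hεi (δ := -εj) (by rcases hεj with rfl | rfl <;> norm_num)
        using 1
      module
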